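/- For s+1 distinct sample indices and the block structure of Theorem 3's matrix, the determinant of A_{s+1} expands as |A_{s+1}| = P(h_{s+1})·|A_s| + R(h_1,…,h_{s+1}), where P is a nonzero monomial in h_{s+1} of degree l_{3s}+l_{3s+1}+l_{3s+2} and R has strictly smaller degree in h_{s+1}; consequently, if |A_s| is a nonzero polynomial in (h_1,…,h_s), then |A_{s+1}| is a nonzero polynomial in (h_1,…,h_{s+1}). -/

import Mathlib

/-!
Send the last variable `h_{s+1}` to the variable `X` of `R[X]`, `R = ℂ[h_1, …, h_s]`. Then the
first `3s` rows of `A_{s+1}` are constant and row `3s + m` has entry `l_k ^ m * X ^ l_k` in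
column `k`. In the Leibniz expansion, the term of a permutation has `X`-degree the sum of the
`l_k` over the three columns met by the last three rows. As `l` is strictly increasing, this is at
most `L = l_{3s} + l_{3s+1} + l_{3s+2}`, with equality exactly when those columns are the last
three. So the coefficient of `X ^ L` is the determinant of the block triangular matrix
`[[A_s, *], [0, V]]`, that is `|A_s| * |V|` with `V` the Vandermonde matrix of the distinct
numbers `l_{3s}, l_{3s+1}, l_{3s+2}`.
-/

open Matrix MvPolynomial

/-- The `3s × 3s` confluent Vandermonde-type matrix of Theorem 3, with entries
`l_k ^ (i mod 3) * h_j ^ (l_k)` regarded as polynomials in the variables `h_1, …, h_s`. -/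
noncomputable def Amat (s : ℕ) (l : Fin (3 * s) → ℕ) :
    Matrix (Fin (3 * s)) (Fin (3 * s)) (MvPolynomial (Fin s) ℂ) :=
  Matrix.of fun r k =>
    ((l k : MvPolynomial (Fin s) ℂ)) ^ ((r : ℕ) % 3) *
      (MvPolynomial.X (⟨(r : ℕ) / 3, by have := r.isLt; omega⟩ : Fin s)) ^ (l k)

open Finset in
theorem Finset.sum_lt_sum_of_card_eq_of_not_subset {ι M : Type*} [DecidableEq ι]
    [AddCommMonoid M] [LinearOrder M] [IsOrderedCancelAddMonoid M]
    {U T : Finset ι} {f : ι → M} (hcard : #U = #T) (hU : ¬U ⊆ T)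
    (hsep : ∀ i ∈ U, i ∉ T → ∀ j ∈ T, j ∉ U → f i < f j) :
    ∑ i ∈ U, f i < ∑ i ∈ T, f i := by
  have hUT : (U \ T).Nonempty := by rwa [sdiff_nonempty]
  have hcard' : #(U \ T) = #(T \ U) := by
    have := card_sdiff_add_card_inter U T
    have := card_sdiff_add_card_inter T U
    rw [inter_comm] at this
    omega
  have hTU : (T \ U).Nonempty := by
    rw [← card_pos, ← hcard']; exact hUT.card_pos
  obtain ⟨t, ht, htmin⟩ := (T \ U).exists_min_image f hTU
  have hdiff : ∑ i ∈ U \ T, f i < ∑ i ∈ T \ U, f i := calc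
    ∑ i ∈ U \ T, f i < ∑ _i ∈ U \ T, f t := by
      refine sum_lt_sum_of_nonempty hUT fun i hi => ?_
      rw [mem_sdiff] at hi ht
      exact hsep i hi.1 hi.2 t ht.1 ht.2
    _ = #(T \ U) • f t := by rw [sum_const, hcard']
    _ ≤ ∑ i ∈ T \ U, f i := card_nsmul_le_sum _ _ _ htmin
  rw [← sum_inter_add_sum_sdiff U T, ← sum_inter_add_sum_sdiff T U, inter_comm]
  exact add_lt_add_right hdiff _

namespace Matrix

open Finset Polynomial Equiv

variable {R n : Type*} [CommRing R] [Fintype n] [DecidableEq n]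

theorem degree_prod_perm_sub_lt (a : Matrix n n R) (S : Finset n) (d : n → ℕ)
    (hd : ∀ i ∉ S, ∀ j ∈ S, d i < d j) (σ : Perm n) :
    (∏ i, Polynomial.C (a (σ i) i) * Polynomial.X ^ (if σ i ∈ S then d i else 0) -
      Polynomial.C (∏ i, if σ i ∈ S ∧ i ∉ S then 0 else a (σ i) i) *
        Polynomial.X ^ ∑ j ∈ S, d j).degree <
      ((∑ j ∈ S, d j : ℕ) : WithBot ℕ) := by
  set U := univ.filter fun i => σ i ∈ S
  have hprod : ∏ i, Polynomial.C (a (σ i) i) * Polynomial.X ^ (if σ i ∈ S then d i else 0) =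
      Polynomial.C (∏ i, a (σ i) i) * Polynomial.X ^ ∑ i ∈ U, d i := by
    rw [prod_mul_distrib, ← map_prod, prod_pow_eq_pow_sum, sum_filter]
  have hcard : #U = #S := by
    rw [show U = S.map σ.symm.toEmbedding by ext; simp [U, mem_map_equiv], card_map]
  rw [hprod]
  by_cases hUS : U ⊆ S
  · have hUS' : U = S := eq_of_subset_of_card_le hUS hcard.ge
    have hblock : ∀ i, σ i ∈ S → i ∈ S := fun i hi => hUS (by simp [U, hi])
    rw [hUS', prod_congr rfl fun i _ => if_neg fun h => h.2 (hblock i h.1), sub_self,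
      degree_zero]
    exact WithBot.bot_lt_coe _
  · obtain ⟨i, hiU, hiS⟩ := not_subset.1 hUS
    have hzero : ∏ i, (if σ i ∈ S ∧ i ∉ S then 0 else a (σ i) i) = 0 :=
      prod_eq_zero (mem_univ i) (if_pos ⟨(mem_filter.1 hiU).2, hiS⟩)
    rw [hzero, map_zero, zero_mul, sub_zero]
    refine (degree_C_mul_X_pow_le _ _).trans_lt (WithBot.coe_lt_coe.2 ?_)
    exact sum_lt_sum_of_card_eq_of_not_subset hcard hUS fun i _ hi j hj _ => hd i hi j hj

theorem degree_det_sub_lt (a : Matrix n n R) (S : Finset n) (d : n → ℕ)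
    (hd : ∀ i ∉ S, ∀ j ∈ S, d i < d j) :
    ((of fun i j => Polynomial.C (a i j) * Polynomial.X ^ (if i ∈ S then d j else 0)).det -
      Polynomial.C (of fun i j => if i ∈ S ∧ j ∉ S then 0 else a i j).det *
        Polynomial.X ^ ∑ j ∈ S, d j).degree <
      ((∑ j ∈ S, d j : ℕ) : WithBot ℕ) := by
  rw [det_apply, det_apply, map_sum, sum_mul, ← sum_sub_distrib]
  refine (degree_sum_le _ _).trans_lt ((Finset.sup_lt_iff (WithBot.bot_lt_coe _)).2 fun σ _ => ?_)
  simp only [of_apply]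
  rw [Units.smul_def, Units.smul_def, map_zsmul, smul_mul_assoc, ← smul_sub]
  exact (degree_smul_le _ _).trans_lt (degree_prod_perm_sub_lt a S d hd σ)

theorem degree_det_sub_lt_of_blocks {m o : Type*} [Fintype m] [Fintype o] [DecidableEq m]
    [DecidableEq o] (M : Matrix (m ⊕ o) (m ⊕ o) R[X]) (A : Matrix m m R) (D : Matrix o o R)
    (d₁ : m → ℕ) (d₂ : o → ℕ) (hA : ∀ i j, M (.inl i) (.inl j) = Polynomial.C (A i j))
    (hB : ∀ i j, ∃ b, M (.inl i) (.inr j) = Polynomial.C b)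
    (hC : ∀ i j, ∃ c, M (.inr i) (.inl j) = Polynomial.C c * Polynomial.X ^ d₁ j)
    (hD : ∀ i j, M (.inr i) (.inr j) = Polynomial.C (D i j) * Polynomial.X ^ d₂ j)
    (hd : ∀ i j, d₁ i < d₂ j) :
    (M.det - Polynomial.C (A.det * D.det) * Polynomial.X ^ ∑ j, d₂ j).degree <
      ((∑ j, d₂ j : ℕ) : WithBot ℕ) := by
  choose B hB using hB
  choose C₀ hC using hC
  set a := fromBlocks A (of B) (of C₀) D
  set S : Finset (m ⊕ o) := (∅ : Finset m).disjSum univ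
  have hM : M = of fun i j =>
      Polynomial.C (a i j) * Polynomial.X ^ (if i ∈ S then Sum.elim d₁ d₂ j else 0) := by
    ext (i | i) (j | j) : 1 <;> simp [a, S, hA, hB, hC, hD]
  have hblock : (of fun i j => if i ∈ S ∧ j ∉ S then 0 else a i j) =
      fromBlocks A (of B) 0 D := by
    ext (i | i) (j | j) : 1 <;> simp [a, S]
  have hsum : ∑ j ∈ S, Sum.elim d₁ d₂ j = ∑ j, d₂ j := by simp [S]
  have := degree_det_sub_lt a S (Sum.elim d₁ d₂)
    (by rintro (i | i) hi (j | j) hj <;> simp_all [S])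
  rwa [← hM, hblock, det_fromBlocks_zero₂₁, hsum] at this

end Matrix

namespace MvPolynomial

section CommSemiring

variable (R : Type*) [CommSemiring R] (n : ℕ)

noncomputable def finSuccEquivLast :
    MvPolynomial (Fin (n + 1)) R ≃ₐ[R] Polynomial (MvPolynomial (Fin n) R) :=
  (renameEquiv R _root_.finSuccEquivLast).trans (optionEquivLeft R (Fin n))

variable {R n}

@[simp]
theorem finSuccEquivLast_X_last : finSuccEquivLast R n (X (Fin.last n)) = Polynomial.X := by
  simp [finSuccEquivLast, optionEquivLeft_X_none]

@[simp]
theorem finSuccEquivLast_X_castSucc (i : Fin n) :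
    finSuccEquivLast R n (X i.castSucc) = Polynomial.C (X i) := by
  simp [finSuccEquivLast, optionEquivLeft_X_some]

@[simp]
theorem finSuccEquivLast_rename_castSucc (p : MvPolynomial (Fin n) R) :
    finSuccEquivLast R n (rename Fin.castSucc p) = Polynomial.C p := by
  have : ((finSuccEquivLast R n).toAlgHom.comp (rename Fin.castSucc)) = Polynomial.CAlgHom := by
    ext i; simp
  exact congrArg (· p) this

theorem natDegree_finSuccEquivLast (p : MvPolynomial (Fin (n + 1)) R) :
    (finSuccEquivLast R n p).natDegree = p.degreeOf (Fin.last n) := by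
  rw [finSuccEquivLast, AlgEquiv.trans_apply, natDegree_optionEquivLeft, renameEquiv_apply,
    ← finSuccEquivLast_last, degreeOf_rename_of_injective (Equiv.injective _)]

end CommSemiring

section CommRing

variable {R : Type*} [CommRing R] {n : ℕ} {p : MvPolynomial (Fin (n + 1)) R}
  {c : MvPolynomial (Fin n) R} {L : ℕ}

theorem exists_eq_X_last_pow_mul_add (hL : 0 < L)
    (h : (finSuccEquivLast R n p - Polynomial.C c * Polynomial.X ^ L).degree < (L : WithBot ℕ)) :
    ∃ q, p = X (Fin.last n) ^ L * rename Fin.castSucc c + q ∧ q.degreeOf (Fin.last n) < L := by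
  set Q := finSuccEquivLast R n p - Polynomial.C c * Polynomial.X ^ L
  refine ⟨(finSuccEquivLast R n).symm Q, ?_, ?_⟩
  · apply (finSuccEquivLast R n).injective
    simp only [Q, map_add, map_mul, map_pow, AlgEquiv.apply_symm_apply, finSuccEquivLast_X_last,
      finSuccEquivLast_rename_castSucc]
    ring
  · rw [← natDegree_finSuccEquivLast, AlgEquiv.apply_symm_apply]
    by_cases hQ : Q = 0
    · rwa [hQ, Polynomial.natDegree_zero]
    · exact (Polynomial.natDegree_lt_iff_degree_lt hQ).2 h

theorem ne_zero_of_degree_finSuccEquivLast_sub_lt (hc : c ≠ 0)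
    (h : (finSuccEquivLast R n p - Polynomial.C c * Polynomial.X ^ L).degree < (L : WithBot ℕ)) :
    p ≠ 0 := by
  rintro rfl
  rw [map_zero, zero_sub, Polynomial.degree_neg, Polynomial.degree_C_mul_X_pow L hc] at h
  exact lt_irrefl _ h

end CommRing

end MvPolynomial

def blockEquiv (s : ℕ) : Fin (3 * s) ⊕ Fin 3 ≃ Fin (3 * (s + 1)) :=
  finSumFinEquiv.trans (finCongr (by ring))

@[simp]
theorem blockEquiv_inl_val {s : ℕ} (i : Fin (3 * s)) : (blockEquiv s (.inl i) : ℕ) = i := rfl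

@[simp]
theorem blockEquiv_inr_val {s : ℕ} (i : Fin 3) :
    (blockEquiv s (.inr i) : ℕ) = 3 * s + i := rfl

section
variable {s : ℕ} (l : Fin (3 * (s + 1)) → ℕ)

theorem finSuccEquivLast_Amat_inl (i : Fin (3 * s)) (k : Fin (3 * (s + 1))) :
    finSuccEquivLast ℂ s (Amat (s + 1) l (blockEquiv s (.inl i)) k) =
      Polynomial.C ((l k : MvPolynomial (Fin s) ℂ) ^ ((i : ℕ) % 3) *
        X (⟨i / 3, by omega⟩ : Fin s) ^ l k) := by
  have hrow : (⟨(blockEquiv s (.inl i) : ℕ) / 3, by omega⟩ : Fin (s + 1)) =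
      Fin.castSucc ⟨i / 3, by omega⟩ := rfl
  simp only [Amat, of_apply, map_mul, map_pow, map_natCast]
  rw [hrow, finSuccEquivLast_X_castSucc]
  simp

theorem finSuccEquivLast_Amat_inr (i : Fin 3) (k : Fin (3 * (s + 1))) :
    finSuccEquivLast ℂ s (Amat (s + 1) l (blockEquiv s (.inr i)) k) =
      Polynomial.C ((l k : MvPolynomial (Fin s) ℂ) ^ (i : ℕ)) * Polynomial.X ^ l k := by
  have hrow : (⟨(blockEquiv s (.inr i) : ℕ) / 3, by omega⟩ : Fin (s + 1)) = Fin.last s :=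
    Fin.ext (by simp; omega)
  have hexp : (blockEquiv s (.inr i) : ℕ) % 3 = i := by simp
  simp only [Amat, of_apply, hrow, hexp]
  simp

theorem degree_finSuccEquivLast_det_Amat_sub_lt (hl : StrictMono l) :
    (finSuccEquivLast ℂ s (Amat (s + 1) l).det -
      Polynomial.C ((Amat s fun k => l (blockEquiv s (.inl k))).det *
        C (vandermonde fun j => (l (blockEquiv s (.inr j)) : ℂ)).det) *
      Polynomial.X ^ ∑ j, l (blockEquiv s (.inr j))).degree <
      ((∑ j, l (blockEquiv s (.inr j)) : ℕ) : WithBot ℕ) := by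
  set v : Fin 3 → ℂ := fun j => (l (blockEquiv s (.inr j)) : ℂ)
  have hlead := degree_det_sub_lt_of_blocks
    (((Amat (s + 1) l).map (finSuccEquivLast ℂ s)).submatrix (blockEquiv s) (blockEquiv s))
    (Amat s fun k => l (blockEquiv s (.inl k))) ((vandermonde v)ᵀ.map C)
    (fun j => l (blockEquiv s (.inl j))) (fun j => l (blockEquiv s (.inr j)))
    (fun i j => finSuccEquivLast_Amat_inl l i _)
    (fun i j => ⟨_, finSuccEquivLast_Amat_inl l i _⟩)
    (fun i j => ⟨_, finSuccEquivLast_Amat_inr l i _⟩)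
    (fun i j => by simp [finSuccEquivLast_Amat_inr, v])
    (fun i j => hl (by rw [Fin.lt_def]; simp; omega))
  have hdetD :
      ((vandermonde v)ᵀ.map C).det = (C (vandermonde v).det : MvPolynomial (Fin s) ℂ) := by
    rw [← RingHom.mapMatrix_apply, ← RingHom.map_det, det_transpose]
  rwa [det_submatrix_equiv_self, ← AlgEquiv.mapMatrix_apply, ← AlgEquiv.map_det, hdetD] at hlead

end

theorem stmt_18 (s : ℕ) (l : Fin (3 * (s + 1)) → ℕ) (hl : StrictMono l) :
    ∃ (cc : ℂ) (R : MvPolynomial (Fin (s + 1)) ℂ),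
      cc ≠ 0 ∧
      (Amat (s + 1) l).det =
        MvPolynomial.C cc *
          MvPolynomial.X (Fin.last s) ^
            (l ⟨3 * s, by omega⟩ + l ⟨3 * s + 1, by omega⟩ + l ⟨3 * s + 2, by omega⟩) *
          MvPolynomial.rename Fin.castSucc
            (Amat s (fun k => l (Fin.castLE (by omega) k))).det + R ∧
      R.degreeOf (Fin.last s) <
        l ⟨3 * s, by omega⟩ + l ⟨3 * s + 1, by omega⟩ + l ⟨3 * s + 2, by omega⟩ ∧
      ((Amat s (fun k => l (Fin.castLE (by omega) k))).det ≠ 0 →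
        (Amat (s + 1) l).det ≠ 0) := by
  set v : Fin 3 → ℂ := fun j => (l (blockEquiv s (.inr j)) : ℂ)
  have hcc : (vandermonde v).det ≠ 0 := by
    rw [det_vandermonde_ne_zero_iff]
    exact fun i j h =>
      Sum.inr_injective ((blockEquiv s).injective (hl.injective (Nat.cast_injective h)))
  have hsum : ∑ j : Fin 3, l (blockEquiv s (.inr j)) =
      l ⟨3 * s, by omega⟩ + l ⟨3 * s + 1, by omega⟩ + l ⟨3 * s + 2, by omega⟩ :=
    Fin.sum_univ_three _
  have hAs : (fun k => l (blockEquiv s (.inl k))) = fun k => l (Fin.castLE (by omega) k) := rfl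
  have hlead := degree_finSuccEquivLast_det_Amat_sub_lt l hl
  rw [hsum, hAs] at hlead
  have hpos : l ⟨3 * s, by omega⟩ < l ⟨3 * s + 1, by omega⟩ := hl (by simp [Fin.lt_def])
  obtain ⟨R, hR, hdeg⟩ := exists_eq_X_last_pow_mul_add (by omega) hlead
  refine ⟨(vandermonde v).det, R, hcc, by rw [hR, map_mul, rename_C]; ring, hdeg,
    fun hdet => ?_⟩
  exact ne_zero_of_degree_finSuccEquivLast_sub_lt
    (mul_ne_zero hdet (by rwa [Ne, MvPolynomial.C_eq_zero])) hlead
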